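/- In the majority model on the torus T_{n,n} with von Neumann neighborhood and random initial coloring with blue-probability p_b = o(n^{-1/2}), with probability 1 - o(1) the process reaches the all-red configuration within 2 steps. -/

import Mathlib

open Filter

/-- Number of blue cells among the four von Neumann neighbors of `v` in the torus. -/
def vnCount (n : ℕ) (g : ZMod n × ZMod n → Bool) (v : ZMod n × ZMod n) : ℕ :=
  (if g (v.1 + 1, v.2) = true then 1 else 0) + (if g (v.1 - 1, v.2) = true then 1 else 0) +
    (if g (v.1, v.2 + 1) = true then 1 else 0) + (if g (v.1, v.2 - 1) = true then 1 else 0)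

/-- One synchronous step of the majority model on the torus `T_{n,n}` with von Neumann
neighborhood: strict majority among the 4 neighbors, ties conserve the current color. -/
def torusMajStep (n : ℕ) (g : ZMod n × ZMod n → Bool) : ZMod n × ZMod n → Bool :=
  fun v => if 2 < vnCount n g v then true else if vnCount n g v < 2 then false else g v

/-- One synchronous step of the biased majority model on the torus `T_{n,n}` with
von Neumann neighborhood: a cell becomes blue iff at least 2 of its 4 neighbors are blue. -/
def torusBMajStep (n : ℕ) (g : ZMod n × ZMod n → Bool) : ZMod n × ZMod n → Bool :=
  fun v => decide (2 ≤ vnCount n g v)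

/-- Moore (8-)adjacency on the torus `T_{n,n}`. -/
def mooreAdj (n : ℕ) (u v : ZMod n × ZMod n) : Prop :=
  u ≠ v ∧ (u.1 = v.1 ∨ u.1 = v.1 + 1 ∨ v.1 = u.1 + 1) ∧
    (u.2 = v.2 ∨ u.2 = v.2 + 1 ∨ v.2 = u.2 + 1)

/-- The Moore (8-)adjacency graph on the torus `T_{n,n}`. -/
def mooreGraph (n : ℕ) : SimpleGraph (ZMod n × ZMod n) where
  Adj := mooreAdj n
  symm := by
    constructor
    rintro u v ⟨h0, h1, h2⟩
    exact ⟨Ne.symm h0, by tauto, by tauto⟩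
  loopless := ⟨fun v h => h.1 rfl⟩

open scoped Classical in
/-- Probability, under the product measure where each vertex is blue (`true`)
independently with probability `p`, of the event `E`. -/
noncomputable def pr {α : Type*} [Fintype α] [DecidableEq α] (p : ℝ)
    (E : (α → Bool) → Prop) : ℝ :=
  ∑ g : α → Bool, if E g then (∏ v, if g v = true then p else 1 - p) else 0

/-!
If a cell is blue after two steps, at least two of its neighbours are blue after one step, and
each of those has at least three blue cells in its closed von Neumann neighbourhood initially.
The closed neighbourhoods of two distinct neighbours of a cell share at most two cells, so the
initial configuration has at least four blue cells in the 5 × 5 window around the cell. For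
`n ≥ 5` the window embeds in the torus, so a union bound over the `n²` windows and the
`C(25, 4)` quadruples in each bounds the failure probability by `C(25, 4) n² p⁴ = O((p √n)⁴)`.
-/

open Finset

section ProductBernoulli

variable {α : Type*} [Fintype α] {p : ℝ}

noncomputable def configWeight (p : ℝ) (g : α → Bool) : ℝ :=
  ∏ v, if g v = true then p else 1 - p

lemma configWeight_nonneg (hp0 : 0 ≤ p) (hp1 : p ≤ 1) (g : α → Bool) : 0 ≤ configWeight p g :=
  prod_nonneg fun v _ => by split <;> linarith

lemma sum_configWeight [DecidableEq α] : ∑ g : α → Bool, configWeight p g = 1 := by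
  unfold configWeight
  rw [← Fintype.prod_sum (fun (_ : α) (b : Bool) => if b = true then p else 1 - p)]
  simp

variable [DecidableEq α]

lemma pr_eq_sum (E : (α → Bool) → Prop) [DecidablePred E] :
    pr p E = ∑ g, if E g then configWeight p g else 0 := by
  simp only [pr, configWeight]
  congr!

lemma pr_mono (hp0 : 0 ≤ p) (hp1 : p ≤ 1) {E F : (α → Bool) → Prop} (h : ∀ g, E g → F g) :
    pr p E ≤ pr p F := by
  classical
  rw [pr_eq_sum, pr_eq_sum]
  refine sum_le_sum fun g _ => ?_
  by_cases hE : E g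
  · simp [hE, h g hE]
  · simp only [hE, if_false]
    split <;> simp [configWeight_nonneg hp0 hp1 g]

lemma pr_le_one (hp0 : 0 ≤ p) (hp1 : p ≤ 1) (E : (α → Bool) → Prop) : pr p E ≤ 1 :=
  (pr_mono (F := fun _ => True) hp0 hp1 fun _ _ => trivial).trans_eq <| by
    simp [pr_eq_sum, sum_configWeight]

lemma pr_not (E : (α → Bool) → Prop) : pr p (fun g => ¬E g) = 1 - pr p E := by
  classical
  rw [eq_sub_iff_add_eq, pr_eq_sum, pr_eq_sum, ← sum_add_distrib,
    ← sum_configWeight (α := α) (p := p)]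
  refine sum_congr rfl fun g _ => ?_
  by_cases hE : E g <;> simp [hE]

lemma pr_exists_le_sum {ι : Type*} (hp0 : 0 ≤ p) (hp1 : p ≤ 1) (s : Finset ι)
    (E : ι → (α → Bool) → Prop) :
    pr p (fun g => ∃ i ∈ s, E i g) ≤ ∑ i ∈ s, pr p (E i) := by
  classical
  simp only [pr_eq_sum]
  rw [sum_comm]
  refine sum_le_sum fun g _ => ?_
  have hterm : ∀ i ∈ s, 0 ≤ if E i g then configWeight p g else 0 := fun i _ => by
    split <;> simp [configWeight_nonneg hp0 hp1 g]
  split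
  · next hex =>
    obtain ⟨i, hi, hEi⟩ := hex
    simpa [hEi] using single_le_sum hterm hi
  · exact sum_nonneg hterm

lemma pr_forall_mem_eq_pow (T : Finset α) :
    pr p (fun g => ∀ v ∈ T, g v = true) = p ^ #T := by
  -- the weight restricted to the event still factors over vertices: a red vertex of `T` weighs 0
  have hfactor : ∀ g : α → Bool, (if ∀ v ∈ T, g v = true then configWeight p g else 0) =
      ∏ v, if g v = true then p else if v ∈ T then 0 else 1 - p := by
    intro g
    by_cases hT : ∀ v ∈ T, g v = true
    · rw [if_pos hT]
      refine prod_congr rfl fun v _ => ?_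
      by_cases hv : v ∈ T <;> simp [hv, hT v]
    · obtain ⟨v, hv, hgv⟩ := not_forall₂.mp hT
      rw [if_neg hT, eq_comm]
      exact prod_eq_zero (mem_univ v) (by simp [hv, hgv])
  rw [pr_eq_sum, sum_congr rfl fun g _ => hfactor g, ← Fintype.prod_sum
    (fun (v : α) (b : Bool) => if b = true then p else if v ∈ T then 0 else 1 - p)]
  simp [apply_ite (HAdd.hAdd p), prod_ite_mem]

end ProductBernoulli

section Torus

def unitVecs : Finset (ℤ × ℤ) := {(1, 0), (-1, 0), (0, 1), (0, -1)}

def closedNbhd (a : ℤ × ℤ) : Finset (ℤ × ℤ) := (insert 0 unitVecs).map (addLeftEmbedding a)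

noncomputable def window : Finset (ℤ × ℤ) := Icc (-2) 2 ×ˢ Icc (-2) 2

lemma zero_notMem_unitVecs : (0 : ℤ × ℤ) ∉ unitVecs := by decide

lemma closedNbhd_subset_window : ∀ u ∈ unitVecs, closedNbhd u ⊆ window := by decide

lemma card_closedNbhd_inter_le :
    ∀ u₁ ∈ unitVecs, ∀ u₂ ∈ unitVecs, u₁ ≠ u₂ → #(closedNbhd u₁ ∩ closedNbhd u₂) ≤ 2 := by
  decide

def toTorus (m : ℕ) : ℤ × ℤ →+ ZMod m × ZMod m :=
  (Int.castAddHom (ZMod m)).prodMap (Int.castAddHom (ZMod m))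

variable {m : ℕ} (g : ZMod m × ZMod m → Bool)

lemma toTorus_apply (a : ℤ × ℤ) : toTorus m a = ((a.1 : ZMod m), (a.2 : ZMod m)) := rfl

lemma vnCount_eq_card (w : ZMod m × ZMod m) :
    vnCount m g w = #{u ∈ unitVecs | g (w + toTorus m u) = true} := by
  rw [card_filter, unitVecs, sum_insert (by decide), sum_insert (by decide),
    sum_insert (by decide), sum_singleton]
  simp [vnCount, toTorus_apply, sub_eq_add_neg, Prod.add_def, add_assoc]

lemma two_le_card_of_torusMajStep {w : ZMod m × ZMod m} (h : torusMajStep m g w = true) :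
    2 ≤ #{u ∈ unitVecs | g (w + toTorus m u) = true} := by
  rw [← vnCount_eq_card]
  unfold torusMajStep at h
  split_ifs at h <;> omega

lemma card_closedNbhd_filter (v : ZMod m × ZMod m) (a : ℤ × ℤ) :
    #{b ∈ closedNbhd a | g (v + toTorus m b) = true} =
      (if g (v + toTorus m a) = true then 1 else 0) + vnCount m g (v + toTorus m a) := by
  simp only [closedNbhd, filter_map, card_map, filter_insert, vnCount_eq_card, Function.comp_def,
    addLeftEmbedding_apply, map_add, map_zero, add_assoc, add_zero]
  split_ifs
  · rw [card_insert_of_notMem fun h => zero_notMem_unitVecs (mem_filter.mp h).1, add_comm]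
  · rw [zero_add]

lemma three_le_card_closedNbhd_filter {v : ZMod m × ZMod m} {a : ℤ × ℤ}
    (h : torusMajStep m g (v + toTorus m a) = true) :
    3 ≤ #{b ∈ closedNbhd a | g (v + toTorus m b) = true} := by
  rw [card_closedNbhd_filter]
  unfold torusMajStep at h
  split_ifs at h <;> simp_all <;> omega

lemma four_le_card_window_filter {v : ZMod m × ZMod m} (h : (torusMajStep m)^[2] g v = true) :
    4 ≤ #{a ∈ window | g (v + toTorus m a) = true} := by
  rw [Function.iterate_succ_apply', Function.iterate_one] at h
  obtain ⟨u₁, hu₁, u₂, hu₂, hne⟩ := one_lt_card.mp (two_le_card_of_torusMajStep _ h)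
  rw [mem_filter] at hu₁ hu₂
  set A₁ := {b ∈ closedNbhd u₁ | g (v + toTorus m b) = true}
  set A₂ := {b ∈ closedNbhd u₂ | g (v + toTorus m b) = true}
  have hA₁ : 3 ≤ #A₁ := three_le_card_closedNbhd_filter g hu₁.2
  have hA₂ : 3 ≤ #A₂ := three_le_card_closedNbhd_filter g hu₂.2
  have hinter : #(A₁ ∩ A₂) ≤ 2 :=
    (card_le_card (inter_subset_inter (filter_subset _ _) (filter_subset _ _))).trans
      (card_closedNbhd_inter_le u₁ hu₁.1 u₂ hu₂.1 hne)
  have hunion : #(A₁ ∪ A₂) ≤ #{a ∈ window | g (v + toTorus m a) = true} := by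
    rw [← filter_union]
    exact card_le_card <| filter_subset_filter _ <|
      union_subset (closedNbhd_subset_window u₁ hu₁.1) (closedNbhd_subset_window u₂ hu₂.1)
  -- inclusion–exclusion: `#(A₁ ∪ A₂) ≥ 3 + 3 - 2`
  have := card_union_add_card_inter A₁ A₂
  omega

end Torus

lemma intCast_injOn_Icc {m : ℕ} {r : ℤ} (hr : 2 * r < m) :
    Set.InjOn (Int.cast : ℤ → ZMod m) (Set.Icc (-r) r) := by
  intro a ha b hb hab
  rw [Set.mem_Icc] at ha hb
  have := Int.eq_zero_of_abs_lt_dvd ((ZMod.intCast_eq_intCast_iff_dvd_sub a b m).mp hab)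
    (abs_lt.mpr ⟨by linarith, by linarith⟩)
  linarith

lemma toTorus_injOn_window {m : ℕ} (hm : 5 ≤ m) : Set.InjOn (toTorus m) window := by
  have hinj := intCast_injOn_Icc (m := m) (r := 2) (by push_cast; omega)
  intro a ha b hb hab
  simp only [window, coe_product, coe_Icc, Set.mem_prod] at ha hb
  rw [toTorus_apply, toTorus_apply, Prod.mk.injEq] at hab
  exact Prod.ext (hinj ha.1 hb.1 hab.1) (hinj ha.2 hb.2 hab.2)

section Probability

variable {m : ℕ} [NeZero m] {p : ℝ}

lemma pr_forall_mem_window_eq_pow (hm : 5 ≤ m) (v : ZMod m × ZMod m) {T : Finset (ℤ × ℤ)}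
    (hT : T ⊆ window) : pr p (fun g => ∀ a ∈ T, g (v + toTorus m a) = true) = p ^ #T := by
  have hinj : Set.InjOn (v + toTorus m ·) T := fun a ha b hb hab =>
    toTorus_injOn_window hm (hT ha) (hT hb) (add_left_cancel hab)
  rw [← card_image_of_injOn hinj, ← pr_forall_mem_eq_pow]
  simp only [forall_mem_image]

lemma one_sub_le_pr_red_after_two_steps (hm : 5 ≤ m) (hp0 : 0 ≤ p) (hp1 : p ≤ 1) :
    1 - 12650 * (m : ℝ) ^ 2 * p ^ 4 ≤
      pr p (fun g => ∀ v, (torusMajStep m)^[2] g v = false) := by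
  set I := (univ : Finset (ZMod m × ZMod m)) ×ˢ window.powersetCard 4
  set E : (ZMod m × ZMod m) × Finset (ℤ × ℤ) → (ZMod m × ZMod m → Bool) → Prop :=
    fun i g => ∀ a ∈ i.2, g (i.1 + toTorus m a) = true
  have hred : ∀ g, ¬(∃ i ∈ I, E i g) → ∀ v, (torusMajStep m)^[2] g v = false := by
    intro g hg v
    by_contra hv
    rw [Bool.not_eq_false] at hv
    obtain ⟨T, hT, hcard⟩ := exists_subset_card_eq (four_le_card_window_filter g hv)
    exact hg ⟨(v, T), mem_product.2 ⟨mem_univ v, mem_powersetCard.2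
      ⟨hT.trans (filter_subset _ _), hcard⟩⟩, fun a ha => (mem_filter.1 (hT ha)).2⟩
  have hsum : ∑ i ∈ I, pr p (E i) = 12650 * (m : ℝ) ^ 2 * p ^ 4 := by
    have hE : ∀ i ∈ I, pr p (E i) = p ^ 4 := fun i hi => by
      obtain ⟨hT, hcard⟩ := mem_powersetCard.1 (mem_product.1 hi).2
      rw [pr_forall_mem_window_eq_pow hm i.1 hT, hcard]
    have hwindow : #window = 25 := by decide
    rw [sum_congr rfl hE, sum_const, nsmul_eq_mul, card_product, card_univ, card_powersetCard,
      hwindow, Fintype.card_prod, ZMod.card, show Nat.choose 25 4 = 12650 by decide]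
    push_cast
    ring
  calc 1 - 12650 * (m : ℝ) ^ 2 * p ^ 4 ≤ 1 - pr p (fun g => ∃ i ∈ I, E i g) := by
        linarith [pr_exists_le_sum hp0 hp1 I E]
    _ = pr p (fun g => ¬∃ i ∈ I, E i g) := (pr_not _).symm
    _ ≤ _ := pr_mono hp0 hp1 hred

end Probability

/-- Majority model on the torus with von Neumann neighborhood: if `p_b = o(n^{-1/2})`,
then w.h.p. the process reaches the all-red configuration within 2 steps. -/
theorem stmt12 (p : ℕ → ℝ) (hp0 : ∀ n, 0 ≤ p n) (hp1 : ∀ n, p n ≤ 1)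
    (hsmall : Tendsto (fun n : ℕ => p n * Real.sqrt (n + 1)) atTop (nhds 0)) :
    Tendsto (fun n : ℕ =>
        pr (α := ZMod (n + 1) × ZMod (n + 1)) (p n)
          (fun g => ∀ v, (torusMajStep (n + 1))^[2] g v = false))
      atTop (nhds 1) := by
  have hbound : Tendsto (fun n : ℕ => 1 - 12650 * ((n + 1 : ℕ) : ℝ) ^ 2 * p n ^ 4) atTop
      (nhds 1) := by
    have h := ((hsmall.pow 4).const_mul 12650).const_sub 1
    rw [zero_pow four_ne_zero, mul_zero, sub_zero] at h
    refine h.congr fun n => ?_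
    rw [mul_pow, show Real.sqrt (n + 1) ^ 4 = (Real.sqrt (n + 1) ^ 2) ^ 2 by ring,
      Real.sq_sqrt (by positivity)]
    push_cast
    ring
  refine tendsto_of_tendsto_of_tendsto_of_le_of_le' hbound tendsto_const_nhds ?_ ?_
  · filter_upwards [eventually_ge_atTop 4] with n hn
    exact one_sub_le_pr_red_after_two_steps (by omega) (hp0 n) (hp1 n)
  · exact Eventually.of_forall fun n => pr_le_one (hp0 n) (hp1 n) _
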